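/- Let X and Y be finite nonempty sets and let f, f' : X → Y. Then tr(ρ_f · ρ_{f'}) = (1/|X|²) · Σ_{(y,y') ∈ Y × Y} |L_f(y) ∩ L_{f'}(y')|². -/

import Mathlib

open Matrix BigOperators
open scoped ComplexOrder

/-- The positive semidefinite square root of a matrix (zero if the matrix is
not positive semidefinite). -/
noncomputable def msqrt {n : Type*} [Fintype n] [DecidableEq n]
    (A : Matrix n n ℂ) : Matrix n n ℂ :=
  letI := Classical.dec A.PosSemidef
  if h : A.PosSemidef then
    (h.1.eigenvectorUnitary : Matrix n n ℂ) * diagonal ((↑) ∘ (√·) ∘ h.1.eigenvalues) *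
      (star (h.1.eigenvectorUnitary : Matrix n n ℂ)) else 0

/-- The fidelity `F(ρ,σ) = tr √(√ρ σ √ρ)` of two (positive semidefinite) matrices. -/
noncomputable def fidelity {n : Type*} [Fintype n] [DecidableEq n]
    (ρ σ : Matrix n n ℂ) : ℝ :=
  ((msqrt (msqrt ρ * σ * msqrt ρ)).trace).re

/-- The hiding state `ρ_f` of a function `f : X → Y`:
`(ρ_f)_{x,x'} = 1/|X|` if `f x = f x'` and `0` otherwise. -/
noncomputable def hidingState {X Y : Type*} [Fintype X] [DecidableEq Y]
    (f : X → Y) : Matrix X X ℂ :=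
  Matrix.of fun x x' => if f x = f x' then (1 : ℂ) / (Fintype.card X) else 0

/-! Both sides count, with weight `1/|X|²`, the pairs `(x, x')` on which `f` and `f'` agree
simultaneously: the trace directly, and the right-hand side by grouping the pairs according to
the common value `(f x, f' x)`. -/

open Finset

theorem sum_card_fiber_sq {X Z : Type*} [Fintype X] [Fintype Z] [DecidableEq Z] (g : X → Z) :
    ∑ z, #{x | g x = z} ^ 2 = ∑ x, #{x' | g x' = g x} := by
  rw [← Finset.sum_fiberwise univ g (fun x => #{x' | g x' = g x})]
  refine sum_congr rfl fun z _ => ?_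
  rw [sq, Finset.sum_congr rfl fun x hx => by rw [(mem_filter.1 hx).2], sum_const, smul_eq_mul]

theorem trace_hidingState_mul {X Y : Type*} [Fintype X] [DecidableEq Y] (f f' : X → Y) :
    (hidingState f * hidingState f').trace =
      1 / (Fintype.card X : ℂ) ^ 2 * ∑ x, (#{x' | f x' = f x ∧ f' x' = f' x} : ℂ) := by
  simp only [trace, Matrix.diag, mul_apply, hidingState, of_apply, mul_sum, card_filter,
    Nat.cast_sum]
  refine sum_congr rfl fun x _ => sum_congr rfl fun x' _ => ?_
  by_cases h : f x' = f x <;> by_cases h' : f' x' = f' x <;> simp [h, h', eq_comm (a := f x), sq]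

theorem stmt_2_general {X Y : Type*} [Fintype X] [Fintype Y] [DecidableEq Y]
    (f f' : X → Y) :
    (hidingState f * hidingState f').trace =
      (1 / (Fintype.card X : ℂ) ^ 2) * ∑ yy : Y × Y,
        ((Finset.univ.filter (fun x : X => f x = yy.1 ∧ f' x = yy.2)).card : ℂ) ^ 2 := by
  have h := sum_card_fiber_sq fun x => (f x, f' x)
  simp only [Prod.ext_iff] at h
  rw [trace_hidingState_mul]
  congr 1
  exact_mod_cast h.symm

/-- `tr(ρ_f ρ_{f'}) = (1/|X|²) Σ_{(y,y')} |L_f(y) ∩ L_{f'}(y')|²`. -/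
theorem stmt_2 {X Y : Type*} [Fintype X] [Fintype Y] [DecidableEq X] [DecidableEq Y]
    [Nonempty X] [Nonempty Y] (f f' : X → Y) :
    (hidingState f * hidingState f').trace =
      (1 / (Fintype.card X : ℂ) ^ 2) * ∑ yy : Y × Y,
        ((Finset.univ.filter (fun x : X => f x = yy.1 ∧ f' x = yy.2)).card : ℂ) ^ 2 :=
  stmt_2_general f f'
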